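/- Let ξ be a real irrational number, let μ be a real number with μ > μ(ξ), and let (Q_n) and (ε_n) be sequences of positive real numbers such that Q_n → +∞, ε_n → 0, and there is a sequence δ_n → 0 with ε_n ≥ Q_n^{−1/(μ−1) + δ_n}. Then there exist integer sequences (u_n) and (v_n) such that lim_{n→∞} u_n/Q_n = 1 and lim_{n→∞} (u_n ξ − v_n)/ε_n = 1. -/

import Mathlib

open Filter Topology

lemma exists_min_dist (ξ : ℝ) (hξ : Irrational ξ) (N : ℕ) :
    ∃ c > 0, ∀ q : ℕ, 1 ≤ q → q ≤ N → ∀ p : ℤ, c ≤ |(q : ℝ) * ξ - p| := by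
  induction N with
  | zero => exact ⟨1, one_pos, fun q h1 h2 p => absurd (h1.trans h2) (by norm_num)⟩
  | succ N ih =>
    obtain ⟨c, hc, hcb⟩ := ih
    set x : ℝ := ((N + 1 : ℕ) : ℝ) * ξ with hx
    have hxirr : Irrational x := hξ.natCast_mul (Nat.succ_ne_zero N)
    have hx0 : 0 < |x - round x| := by
      rw [abs_pos, sub_ne_zero]
      exact hxirr.ne_int (round x)
    refine ⟨min c |x - round x|, lt_min hc hx0, fun q h1 h2 p => ?_⟩
    rcases eq_or_lt_of_le h2 with h | h
    · refine le_trans (min_le_right _ _) ?_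
      rw [h]
      exact round_le x p
    · exact le_trans (min_le_left _ _) (hcb q h1 (Nat.lt_succ_iff.mp h) p)

lemma dirichlet' (ξ : ℝ) (X : ℕ) (hX : 0 < X) :
    ∃ (q : ℕ) (p : ℤ), 1 ≤ q ∧ q ≤ X ∧ |(q : ℝ) * ξ - p| ≤ 1 / ((X : ℝ) + 1) := by
  obtain ⟨j, k, hk0, hkX, h⟩ := Real.exists_int_int_abs_mul_sub_le ξ hX
  refine ⟨k.toNat, j, ?_, ?_, ?_⟩
  · omega
  · omega
  · have : ((k.toNat : ℕ) : ℝ) = (k : ℝ) := by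
      exact_mod_cast Int.toNat_of_nonneg hk0.le
    rw [this]
    exact_mod_cast h

lemma rpow_tendsto_zero {Q : ℕ → ℝ} (hQ : Tendsto Q atTop atTop)
    {f : ℕ → ℝ} {L : ℝ} (hL : L < 0) (hf : Tendsto f atTop (𝓝 L)) :
    Tendsto (fun n => Q n ^ f n) atTop (𝓝 0) := by
  have h1 : ∀ᶠ n in atTop, (1 : ℝ) ≤ Q n := hQ.eventually_ge_atTop 1
  have h2 : ∀ᶠ n in atTop, f n < L / 2 := hf.eventually (gt_mem_nhds (by linarith))
  have hg : Tendsto (fun n => Q n ^ (L / 2)) atTop (𝓝 0) := by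
    have := (tendsto_rpow_neg_atTop (show (0:ℝ) < -(L/2) by linarith)).comp hQ
    simpa [Function.comp_def] using this
  refine squeeze_zero' ?_ ?_ hg
  · filter_upwards [h1] with n hn
    exact Real.rpow_nonneg (by linarith) _
  · filter_upwards [h1, h2] with n hn1 hn2
    exact Real.rpow_le_rpow_of_exponent_le hn1 hn2.le

/-- The irrationality exponent of a real number, as an extended real:
the infimum of all real `μ` such that `|ξ - p/q| > 1/q^μ` for all integers `p, q`
with `q` sufficiently large (`⊤` if no such real `μ` exists). -/
noncomputable def irrationalityExponent (ξ : ℝ) : EReal :=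
  sInf {x : EReal | ∃ μ : ℝ, x = (μ : EReal) ∧
    ∀ᶠ q : ℕ in atTop, ∀ p : ℤ, |ξ - (p : ℝ) / (q : ℝ)| > 1 / (q : ℝ) ^ μ}

set_option maxHeartbeats 2000000 in
theorem exists_sequences_general_rates (ξ : ℝ) (hξ : Irrational ξ)
    (μ : ℝ) (hμ : irrationalityExponent ξ < (μ : EReal))
    (Q ε : ℕ → ℝ) (hQpos : ∀ n, 0 < Q n) (hεpos : ∀ n, 0 < ε n)
    (hQ : Tendsto Q atTop atTop) (hε : Tendsto ε atTop (𝓝 0))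
    (hlb : ∃ δ : ℕ → ℝ, Tendsto δ atTop (𝓝 0) ∧
      ∀ n, ε n ≥ Q n ^ (-(1 / (μ - 1)) + δ n)) :
    ∃ u v : ℕ → ℤ,
      Tendsto (fun n => (u n : ℝ) / Q n) atTop (𝓝 1) ∧
      Tendsto (fun n => ((u n : ℝ) * ξ - (v n : ℝ)) / ε n) atTop (𝓝 1) := by
  obtain ⟨δ, hδ, hεlb⟩ := hlb
  rw [irrationalityExponent, sInf_lt_iff] at hμ
  obtain ⟨x, ⟨ν, rfl, Hν⟩, hxμ⟩ := hμ
  have hνμ : ν < μ := by exact_mod_cast hxμ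
  rw [eventually_atTop] at Hν
  obtain ⟨N₀, hN₀⟩ := Hν
  set N := max N₀ 2 with hNdef
  obtain ⟨c, hc, hcb⟩ := exists_min_dist ξ hξ N
  have key : ∀ q : ℕ, N < q → ∀ p : ℤ, (q : ℝ) ^ (1 - ν) < |(q : ℝ) * ξ - p| := by
    intro q hq p
    have hq0 : (0 : ℝ) < q := by
      have : 2 < q := lt_of_le_of_lt (le_max_right N₀ 2) hq
      positivity
    have h := hN₀ q (le_of_lt (lt_of_le_of_lt (le_max_left N₀ 2) hq)) p
    have h2 : (q : ℝ) * (1 / (q : ℝ) ^ ν) < (q : ℝ) * |ξ - (p : ℝ) / q| :=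
      mul_lt_mul_of_pos_left h hq0
    have e1 : (q : ℝ) * |ξ - (p : ℝ) / q| = |(q : ℝ) * ξ - p| := by
      rw [show (q : ℝ) * ξ - p = (q : ℝ) * (ξ - (p : ℝ) / q) by field_simp, abs_mul,
        abs_of_pos hq0]
    have e2 : (q : ℝ) * (1 / (q : ℝ) ^ ν) = (q : ℝ) ^ (1 - ν) := by
      rw [Real.rpow_sub hq0, Real.rpow_one]
      field_simp
    rw [e1, e2] at h2
    exact h2
  have hν2 : 2 < ν := by
    obtain ⟨X, hX1, hXc⟩ : ∃ X : ℕ, 1 ≤ X ∧ 1 / ((X : ℝ) + 1) < c := by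
      obtain ⟨X, hX⟩ := exists_nat_gt (1 / c)
      refine ⟨max X 1, le_max_right X 1, ?_⟩
      rw [div_lt_iff₀ (by positivity)]
      rw [div_lt_iff₀ hc] at hX
      have : (X : ℝ) ≤ (max X 1 : ℕ) := by exact_mod_cast le_max_left X 1
      nlinarith
    obtain ⟨q, p, hq1, hqX, hqp⟩ := dirichlet' ξ X hX1
    have hqN : N < q := by
      by_contra hcon
      push_neg at hcon
      exact absurd (le_trans (hcb q hq1 hcon p) hqp) (not_le.mpr hXc)
    have h1 := key q hqN p
    have hq2 : 2 < q := lt_of_le_of_lt (le_max_right N₀ 2) hqN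
    have hqR : (1 : ℝ) < q := by exact_mod_cast Nat.lt_of_lt_of_le Nat.one_lt_two hq2.le
    have hq0 : (0 : ℝ) < q := by linarith
    have hqXR : (q : ℝ) ≤ X := by exact_mod_cast hqX
    have h2 : (q : ℝ) ^ (1 - ν) < (q : ℝ) ^ (-1 : ℝ) := by
      have c1 : 1 / ((X : ℝ) + 1) ≤ 1 / ((q : ℝ) + 1) :=
        one_div_le_one_div_of_le (by linarith) (by linarith)
      have c2 : 1 / ((q : ℝ) + 1) < 1 / (q : ℝ) :=
        one_div_lt_one_div_of_lt hq0 (by linarith)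
      have c3 : (q : ℝ) ^ (-1 : ℝ) = 1 / (q : ℝ) := by
        rw [Real.rpow_neg_one, one_div]
      calc (q : ℝ) ^ (1 - ν) < |(q : ℝ) * ξ - p| := h1
        _ ≤ 1 / ((X : ℝ) + 1) := hqp
        _ ≤ 1 / ((q : ℝ) + 1) := c1
        _ < (q : ℝ) ^ (-1 : ℝ) := by rw [c3]; exact c2
    have := (Real.rpow_lt_rpow_left_iff hqR).mp h2
    linarith
  -- constants
  have hμ2 : 2 < μ := lt_trans hν2 hνμ
  have hμ1 : (0 : ℝ) < μ - 1 := by linarith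
  have hν1 : (0 : ℝ) < ν - 1 := by linarith
  have hν0 : (0 : ℝ) < ν := by linarith
  set κ := (μ - ν) / (2 * ν) with hκdef
  have hκ : 0 < κ := div_pos (by linarith) (by linarith)
  have hκν : (1 + κ) * ν = (μ + ν) / 2 := by
    rw [hκdef]; field_simp; ring
  have hκνμ : (1 + κ) * ν < μ := by rw [hκν]; linarith
  have hκν0 : 0 < (1 + κ) * ν := by nlinarith
  set A := max (1 / (μ - 1)) (μ * (ν - 1) / ((μ - 1) * ν)) with hAdef
  set b := (1 + A) / 2 with hbdef
  have hA1 : A < 1 := by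
    apply max_lt
    · rw [div_lt_one hμ1]; linarith
    · rw [div_lt_one (mul_pos hμ1 hν0)]; nlinarith
  have hA0 : 0 < A := lt_of_lt_of_le (by positivity) (le_max_left _ _)
  have hb0 : 0 < b := by rw [hbdef]; linarith
  have hb1 : b < 1 := by rw [hbdef]; linarith
  have hbA : A < b := by rw [hbdef]; linarith
  have hbgt1 : 1 / (μ - 1) < b := lt_of_le_of_lt (le_max_left _ _) hbA
  have hbgt2 : μ * (ν - 1) / ((μ - 1) * ν) < b := lt_of_le_of_lt (le_max_right _ _) hbA
  set z := (1 + κ) * ν with hzdef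
  set E := b * ν / (ν - 1) with hEdef
  set e₁ := 1 - E + 1 / (μ - 1) with he₁def
  have hmain : μ / (μ - 1) < E := by
    rw [hEdef, div_lt_div_iff₀ hμ1 hν1]
    rw [div_lt_iff₀ (mul_pos hμ1 hν0)] at hbgt2
    nlinarith
  have hfrac : (1 : ℝ) + 1 / (μ - 1) = μ / (μ - 1) := by field_simp; ring
  have he1 : e₁ < 0 := by rw [he₁def]; linarith
  have he3 : -b + 1 / (μ - 1) < 0 := by linarith
  have hL2 : (1 / (μ - 1)) * z - E < 0 := by
    have h1 : (1 / (μ - 1)) * z < (1 / (μ - 1)) * μ :=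
      mul_lt_mul_of_pos_left hκνμ (by positivity)
    have h2 : (1 / (μ - 1)) * μ = μ / (μ - 1) := by ring
    linarith
  -- construction
  set α := fun n => ε n ^ (1 + κ) with hαdef
  have hαpos : ∀ n, 0 < α n := fun n => Real.rpow_pos_of_pos (hεpos n) _
  set X₁ := fun n => ⌈1 / α n⌉₊ with hX₁def
  have hX₁pos : ∀ n, 0 < X₁ n := fun n => Nat.ceil_pos.mpr (one_div_pos.mpr (hαpos n))
  choose q₁ p₁ hq₁1 hq₁X hθ₁le using fun n => dirichlet' ξ (X₁ n) (hX₁pos n)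
  set θ₁ := fun n => (q₁ n : ℝ) * ξ - p₁ n with hθ₁def
  set β := fun n => Q n ^ (-b) with hβdef
  have hβpos : ∀ n, 0 < β n := fun n => Real.rpow_pos_of_pos (hQpos n) _
  set X₂ := fun n => ⌈1 / β n⌉₊ with hX₂def
  have hX₂pos : ∀ n, 0 < X₂ n := fun n => Nat.ceil_pos.mpr (one_div_pos.mpr (hβpos n))
  choose q₂ p₂ hq₂1 hq₂X hθ₂le using fun n => dirichlet' ξ (X₂ n) (hX₂pos n)
  set θ₂ := fun n => (q₂ n : ℝ) * ξ - p₂ n with hθ₂def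
  set m := fun n => ⌊ε n / |θ₁ n|⌋ with hmdef
  set σ := fun n => if 0 < θ₁ n then (1 : ℤ) else -1 with hσdef
  set u₀ := fun n => σ n * m n * (q₁ n : ℤ) with hu₀def
  set v₀ := fun n => σ n * m n * p₁ n with hv₀def
  set s := fun n => ⌊(Q n - ((u₀ n : ℤ) : ℝ)) / (q₂ n : ℝ)⌋ with hsdef
  set G₁ := fun n => Q n ^ (b - 1) + (Q n)⁻¹ with hG₁def
  set G₂ := fun n => ε n ^ κ + (Q n ^ (e₁ - δ n)
      + 2 ^ ν * Q n ^ ((1 / (μ - 1) - δ n) * z - E) + Q n ^ (-b + 1 / (μ - 1) - δ n)) with hG₂def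
  have hG₁0 : Tendsto G₁ atTop (𝓝 0) := by
    have t1 : Tendsto (fun n => Q n ^ (b - 1)) atTop (𝓝 0) :=
      rpow_tendsto_zero hQ (by linarith) tendsto_const_nhds
    have t2 : Tendsto (fun n => (Q n)⁻¹) atTop (𝓝 0) := hQ.inv_tendsto_atTop
    simpa using t1.add t2
  have hG₂0 : Tendsto G₂ atTop (𝓝 0) := by
    have t0 : Tendsto (fun n => ε n ^ κ) atTop (𝓝 0) := by
      have hcont := (Real.continuousAt_rpow_const 0 κ (Or.inr hκ.le)).tendsto.comp hε
      simp only [Function.comp_def] at hcont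
      rwa [Real.zero_rpow (ne_of_gt hκ)] at hcont
    have t1 : Tendsto (fun n => Q n ^ (e₁ - δ n)) atTop (𝓝 0) := by
      apply rpow_tendsto_zero hQ he1
      simpa using tendsto_const_nhds.sub hδ
    have t2 : Tendsto (fun n => (2:ℝ) ^ ν * Q n ^ ((1 / (μ - 1) - δ n) * z - E)) atTop (𝓝 0) := by
      have hf : Tendsto (fun n => (1 / (μ - 1) - δ n) * z - E) atTop (𝓝 ((1 / (μ - 1)) * z - E)) := by
        have := ((tendsto_const_nhds (x := 1 / (μ - 1)) (f := atTop)).sub hδ).mul_const z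
        simpa using this.sub (tendsto_const_nhds (x := E))
      have h := rpow_tendsto_zero hQ hL2 hf
      simpa using h.const_mul ((2:ℝ) ^ ν)
    have t3 : Tendsto (fun n => Q n ^ (-b + 1 / (μ - 1) - δ n)) atTop (𝓝 0) := by
      apply rpow_tendsto_zero hQ he3
      have : Tendsto (fun n => (-b + 1 / (μ - 1)) - δ n) atTop (𝓝 (-b + 1 / (μ - 1) - 0)) :=
        tendsto_const_nhds.sub hδ
      simpa [sub_zero, sub_sub] using this
    have := t0.add ((t1.add t2).add t3)
    rw [hG₂def]
    simpa only [add_zero, zero_add] using this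
  have hβ0 : Tendsto β atTop (𝓝 0) := by
    apply rpow_tendsto_zero hQ (show -b < 0 by linarith) tendsto_const_nhds
  have hevε : ∀ᶠ n in atTop, ε n < min c 1 := hε.eventually (gt_mem_nhds (lt_min hc one_pos))
  have hevβ : ∀ᶠ n in atTop, β n < c := hβ0.eventually (gt_mem_nhds hc)
  have hbound : ∀ᶠ n in atTop,
      |((u₀ n + s n * (q₂ n : ℤ) : ℤ) : ℝ) / Q n - 1| ≤ G₁ n ∧
      |(((u₀ n + s n * (q₂ n : ℤ) : ℤ) : ℝ) * ξ - ((v₀ n + s n * p₂ n : ℤ) : ℝ)) / ε n - 1|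
        ≤ G₂ n := by
    filter_upwards [hevε, hevβ] with n h1 h2
    have εp : 0 < ε n := hεpos n
    have Qp : 0 < Q n := hQpos n
    have hε1 : ε n < 1 := lt_of_lt_of_le h1 (min_le_right c 1)
    have hεc : ε n < c := lt_of_lt_of_le h1 (min_le_left c 1)
    have αp : 0 < α n := hαpos n
    have βp : 0 < β n := hβpos n
    have eθ₁ : θ₁ n = (q₁ n : ℝ) * ξ - p₁ n := rfl
    have eθ₂ : θ₂ n = (q₂ n : ℝ) * ξ - p₂ n := rfl
    have eα : α n = ε n ^ (1 + κ) := rfl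
    have eβ : β n = Q n ^ (-b) := rfl
    have em : (m n : ℤ) = ⌊ε n / |θ₁ n|⌋ := rfl
    have eσ : σ n = if 0 < θ₁ n then (1:ℤ) else -1 := rfl
    have eu₀ : u₀ n = σ n * m n * (q₁ n : ℤ) := rfl
    have ev₀ : v₀ n = σ n * m n * p₁ n := rfl
    have es : s n = ⌊(Q n - ((u₀ n : ℤ) : ℝ)) / (q₂ n : ℝ)⌋ := rfl
    have eX₁ : X₁ n = ⌈1 / α n⌉₊ := rfl
    have eX₂ : X₂ n = ⌈1 / β n⌉₊ := rfl
    have hα1 : α n ≤ ε n := by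
      have h := Real.rpow_le_rpow_of_exponent_ge εp hε1.le (show (1:ℝ) ≤ 1 + κ by linarith)
      rw [Real.rpow_one] at h
      rw [eα]; exact h
    have hq₁0R : (0:ℝ) < q₁ n := by exact_mod_cast hq₁1 n
    have hq₂0R : (0:ℝ) < q₂ n := by exact_mod_cast hq₂1 n
    -- small |θ₁|
    have hθ₁α : |θ₁ n| < α n := by
      have hle := hθ₁le n
      rw [← eθ₁] at hle
      refine lt_of_le_of_lt hle ?_
      have hc1 : 1 / α n < (X₁ n : ℝ) + 1 := lt_of_le_of_lt (Nat.le_ceil _) (lt_add_one _)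
      calc 1 / ((X₁ n : ℝ) + 1) < 1 / (1 / α n) :=
            one_div_lt_one_div_of_lt (one_div_pos.mpr αp) hc1
        _ = α n := one_div_one_div _
    have hθ₂β : |θ₂ n| < β n := by
      have hle := hθ₂le n
      rw [← eθ₂] at hle
      refine lt_of_le_of_lt hle ?_
      have hc1 : 1 / β n < (X₂ n : ℝ) + 1 := lt_of_le_of_lt (Nat.le_ceil _) (lt_add_one _)
      calc 1 / ((X₂ n : ℝ) + 1) < 1 / (1 / β n) :=
            one_div_lt_one_div_of_lt (one_div_pos.mpr βp) hc1
        _ = β n := one_div_one_div _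
    -- q's are large
    have hq₁N : N < q₁ n := by
      by_contra hcon
      push_neg at hcon
      have hle := hcb (q₁ n) (hq₁1 n) hcon (p₁ n)
      rw [← eθ₁] at hle
      linarith only [hle, hθ₁α, hα1, hεc, abs_nonneg (θ₁ n)]
    have hq₂N : N < q₂ n := by
      by_contra hcon
      push_neg at hcon
      have hle := hcb (q₂ n) (hq₂1 n) hcon (p₂ n)
      rw [← eθ₂] at hle
      linarith only [hle, hθ₂β, h2]
    have hθ₁lb : (q₁ n : ℝ) ^ (1 - ν) < |θ₁ n| := by
      have h := key (q₁ n) hq₁N (p₁ n)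
      rwa [← eθ₁] at h
    have hθ₂lb : (q₂ n : ℝ) ^ (1 - ν) < |θ₂ n| := by
      have h := key (q₂ n) hq₂N (p₂ n)
      rwa [← eθ₂] at h
    have hθ₁pos : 0 < |θ₁ n| := lt_trans (Real.rpow_pos_of_pos hq₁0R _) hθ₁lb
    -- m facts
    have hm_le : (m n : ℝ) ≤ ε n / |θ₁ n| := by
      rw [show ((m n : ℤ) : ℝ) = ((⌊ε n / |θ₁ n|⌋ : ℤ) : ℝ) by rw [← em]]
      exact Int.floor_le _
    have hm_lt : ε n / |θ₁ n| < (m n : ℝ) + 1 := by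
      rw [show ((m n : ℤ) : ℝ) = ((⌊ε n / |θ₁ n|⌋ : ℤ) : ℝ) by rw [← em]]
      exact Int.lt_floor_add_one _
    have hm0 : (0:ℝ) ≤ (m n : ℝ) := by
      rw [show ((m n : ℤ) : ℝ) = ((⌊ε n / |θ₁ n|⌋ : ℤ) : ℝ) by rw [← em]]
      exact_mod_cast Int.floor_nonneg.mpr (by positivity)
    have hmul : (m n : ℝ) * |θ₁ n| ≤ ε n := (le_div_iff₀ hθ₁pos).mp hm_le
    have hmul2 : ε n - |θ₁ n| < (m n : ℝ) * |θ₁ n| := by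
      have h := (div_lt_iff₀ hθ₁pos).mp hm_lt
      linarith only [h]
    -- sign
    have hσθ : (σ n : ℝ) * θ₁ n = |θ₁ n| := by
      rw [eσ]
      by_cases hpos : 0 < θ₁ n
      · rw [if_pos hpos, abs_of_pos hpos]; push_cast; ring
      · have hne : θ₁ n ≠ 0 := abs_pos.mp hθ₁pos
        have hneg : θ₁ n < 0 := lt_of_le_of_ne (not_lt.mp hpos) hne
        rw [if_neg hpos, abs_of_neg hneg]; push_cast; ring
    have hσabs : |(σ n : ℝ)| = 1 := by
      rw [eσ]
      by_cases hpos : 0 < θ₁ n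
      · rw [if_pos hpos]; norm_num
      · rw [if_neg hpos]; norm_num
    have hu₀ξ : ((u₀ n : ℤ) : ℝ) * ξ - ((v₀ n : ℤ) : ℝ) = (m n : ℝ) * |θ₁ n| := by
      rw [eu₀, ev₀, ← hσθ, eθ₁]
      push_cast
      ring
    have hu₀abs : |((u₀ n : ℤ) : ℝ)| = (m n : ℝ) * (q₁ n : ℝ) := by
      rw [eu₀]
      push_cast
      rw [abs_mul, abs_mul, hσabs, abs_of_nonneg hm0, abs_of_nonneg hq₁0R.le, one_mul]
    -- |u₀| upper bound
    have hθinv : |θ₁ n|⁻¹ ≤ (q₁ n : ℝ) ^ (ν - 1) := by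
      have h' : ((q₁ n : ℝ) ^ (ν - 1))⁻¹ = (q₁ n : ℝ) ^ (1 - ν) := by
        rw [← Real.rpow_neg hq₁0R.le]; ring_nf
      calc |θ₁ n|⁻¹ ≤ ((q₁ n : ℝ) ^ (1 - ν))⁻¹ :=
            inv_anti₀ (Real.rpow_pos_of_pos hq₁0R _) hθ₁lb.le
        _ = (q₁ n : ℝ) ^ (ν - 1) := by rw [← h', inv_inv]
    have hq₁2α : (q₁ n : ℝ) ≤ 2 / α n := by
      have t1 : (q₁ n : ℝ) ≤ X₁ n := by exact_mod_cast hq₁X n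
      have t2 : (X₁ n : ℝ) < 1 / α n + 1 := by
        rw [eX₁]
        exact Nat.ceil_lt_add_one (le_of_lt (one_div_pos.mpr αp))
      have t3 : (1:ℝ) ≤ 1 / α n := one_le_one_div αp (le_trans hα1 hε1.le)
      have t4 : 2 / α n = 1 / α n + 1 / α n := by ring
      linarith only [t1, t2, t3, t4]
    have hu₀le : |((u₀ n : ℤ) : ℝ)| ≤ 2 ^ ν * ε n ^ (1 - z) := by
      have c1 : (m n : ℝ) * (q₁ n : ℝ) ≤ (ε n / |θ₁ n|) * (q₁ n : ℝ) :=
        mul_le_mul_of_nonneg_right hm_le hq₁0R.le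
      have c2 : ε n / |θ₁ n| ≤ ε n * (q₁ n : ℝ) ^ (ν - 1) := by
        rw [div_eq_mul_inv]
        exact mul_le_mul_of_nonneg_left hθinv εp.le
      have c3 : (ε n * (q₁ n : ℝ) ^ (ν - 1)) * (q₁ n : ℝ) = ε n * (q₁ n : ℝ) ^ ν := by
        have : (q₁ n : ℝ) ^ (ν - 1) * (q₁ n : ℝ) ^ (1:ℝ) = (q₁ n : ℝ) ^ ν := by
          rw [← Real.rpow_add hq₁0R]; ring_nf
        rw [mul_assoc, ← this, Real.rpow_one]
      have c4 : (q₁ n : ℝ) ^ ν ≤ (2 / α n) ^ ν :=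
        Real.rpow_le_rpow hq₁0R.le hq₁2α (by linarith)
      have c5 : (2 / α n) ^ ν = 2 ^ ν / ε n ^ z := by
        rw [Real.div_rpow (by norm_num) αp.le, eα, ← Real.rpow_mul εp.le, ← hzdef]
      have c6 : ε n * (2 ^ ν / ε n ^ z) = 2 ^ ν * ε n ^ (1 - z) := by
        rw [Real.rpow_sub εp, Real.rpow_one]
        ring
      calc |((u₀ n : ℤ) : ℝ)| = (m n : ℝ) * (q₁ n : ℝ) := hu₀abs
        _ ≤ (ε n / |θ₁ n|) * (q₁ n : ℝ) := c1
        _ ≤ (ε n * (q₁ n : ℝ) ^ (ν - 1)) * (q₁ n : ℝ) :=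
            mul_le_mul_of_nonneg_right c2 hq₁0R.le
        _ = ε n * (q₁ n : ℝ) ^ ν := c3
        _ ≤ ε n * (2 ^ ν / ε n ^ z) := by
            rw [← c5]; exact mul_le_mul_of_nonneg_left c4 εp.le
        _ = 2 ^ ν * ε n ^ (1 - z) := c6
    -- q₂ lower bound
    have hq₂lb : Q n ^ (b / (ν - 1)) ≤ (q₂ n : ℝ) := by
      have hqβ : (q₂ n : ℝ) ^ (1 - ν) < β n := lt_trans hθ₂lb hθ₂β
      have ht : -(1 / (ν - 1)) < 0 := neg_neg_iff_pos.mpr (one_div_pos.mpr hν1)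
      have hrp := Real.rpow_lt_rpow_of_neg (Real.rpow_pos_of_pos hq₂0R (1 - ν)) hqβ ht
      have e5 : ((q₂ n : ℝ) ^ ((1:ℝ) - ν)) ^ (-(1 / (ν - 1))) = (q₂ n : ℝ) := by
        rw [← Real.rpow_mul hq₂0R.le,
          show ((1:ℝ) - ν) * (-(1 / (ν - 1))) = 1 by field_simp; ring, Real.rpow_one]
      have e6 : (β n) ^ (-(1 / (ν - 1))) = Q n ^ (b / (ν - 1)) := by
        rw [eβ, ← Real.rpow_mul Qp.le]
        congr 1
        field_simp
      rw [e5, e6] at hrp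
      exact hrp.le
    have hq₂le : (q₂ n : ℝ) ≤ Q n ^ b + 1 := by
      have t1 : (q₂ n : ℝ) ≤ X₂ n := by exact_mod_cast hq₂X n
      have t2 : (X₂ n : ℝ) < 1 / β n + 1 := by
        rw [eX₂]
        exact Nat.ceil_lt_add_one (le_of_lt (one_div_pos.mpr βp))
      have t3 : 1 / β n = Q n ^ b := by
        rw [eβ, Real.rpow_neg Qp.le, one_div, inv_inv]
      linarith only [t1, t2, t3]
    -- s facts
    have hs_le : (s n : ℝ) ≤ (Q n - ((u₀ n : ℤ) : ℝ)) / (q₂ n : ℝ) := by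
      rw [show ((s n : ℤ) : ℝ) = ((⌊(Q n - ((u₀ n : ℤ) : ℝ)) / (q₂ n : ℝ)⌋ : ℤ) : ℝ) by rw [← es]]
      exact Int.floor_le _
    have hs_lt : (Q n - ((u₀ n : ℤ) : ℝ)) / (q₂ n : ℝ) < (s n : ℝ) + 1 := by
      rw [show ((s n : ℤ) : ℝ) = ((⌊(Q n - ((u₀ n : ℤ) : ℝ)) / (q₂ n : ℝ)⌋ : ℤ) : ℝ) by rw [← es]]
      exact Int.lt_floor_add_one _
    have hsq1 : (s n : ℝ) * (q₂ n : ℝ) ≤ Q n - ((u₀ n : ℤ) : ℝ) := (le_div_iff₀ hq₂0R).mp hs_le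
    have hsq2 : Q n - ((u₀ n : ℤ) : ℝ) < ((s n : ℝ) + 1) * (q₂ n : ℝ) := (div_lt_iff₀ hq₂0R).mp hs_lt
    have hQu1 : 0 ≤ Q n - ((u₀ n + s n * (q₂ n : ℤ) : ℤ) : ℝ) := by
      push_cast
      push_cast at hsq1
      linarith only [hsq1]
    have hQu2 : Q n - ((u₀ n + s n * (q₂ n : ℤ) : ℤ) : ℝ) < (q₂ n : ℝ) := by
      push_cast
      push_cast at hsq2
      linarith only [hsq2]
    constructor
    · -- goal A
      have hA1' : |((u₀ n + s n * (q₂ n : ℤ) : ℤ) : ℝ) / Q n - 1|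
          = (Q n - ((u₀ n + s n * (q₂ n : ℤ) : ℤ) : ℝ)) / Q n := by
        rw [div_sub_one (ne_of_gt Qp), abs_div, abs_of_pos Qp,
          abs_of_nonpos (by linarith only [hQu1]), neg_sub]
      rw [hA1', hG₁def]
      calc (Q n - ((u₀ n + s n * (q₂ n : ℤ) : ℤ) : ℝ)) / Q n
          ≤ (Q n ^ b + 1) / Q n := by
            apply (div_le_div_iff_of_pos_right Qp).mpr
            linarith only [hQu2, hq₂le]
        _ = Q n ^ (b - 1) + (Q n)⁻¹ := by
            rw [add_div, Real.rpow_sub Qp, Real.rpow_one, one_div]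
    · -- goal B
      have huv : ((u₀ n + s n * (q₂ n : ℤ) : ℤ) : ℝ) * ξ - ((v₀ n + s n * p₂ n : ℤ) : ℝ)
          = (m n : ℝ) * |θ₁ n| + (s n : ℝ) * θ₂ n := by
        rw [eθ₂]
        push_cast
        push_cast at hu₀ξ
        linear_combination hu₀ξ
      have hstep1 : (((u₀ n + s n * (q₂ n : ℤ) : ℤ) : ℝ) * ξ - ((v₀ n + s n * p₂ n : ℤ) : ℝ)) / ε n - 1
          = (((m n : ℝ) * |θ₁ n| - ε n) + (s n : ℝ) * θ₂ n) / ε n := by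
        rw [huv]
        field_simp
        ring
      have habs1 : |(m n : ℝ) * |θ₁ n| - ε n| ≤ |θ₁ n| :=
        abs_le.mpr ⟨by linarith only [hmul2], by linarith only [hmul, hθ₁pos]⟩
      have habs2 : |(s n : ℝ)| ≤ (Q n + |((u₀ n : ℤ) : ℝ)|) / (q₂ n : ℝ) + 1 := by
        have hx1 : |(Q n - ((u₀ n : ℤ) : ℝ)) / (q₂ n : ℝ)|
            ≤ (Q n + |((u₀ n : ℤ) : ℝ)|) / (q₂ n : ℝ) := by
          rw [abs_div, abs_of_pos hq₂0R]
          apply (div_le_div_iff_of_pos_right hq₂0R).mpr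
          calc |Q n - ((u₀ n : ℤ) : ℝ)| ≤ |Q n| + |((u₀ n : ℤ) : ℝ)| := abs_sub _ _
            _ = Q n + |((u₀ n : ℤ) : ℝ)| := by rw [abs_of_pos Qp]
        refine abs_le.mpr ⟨?_, ?_⟩
        · have hna := neg_abs_le ((Q n - ((u₀ n : ℤ) : ℝ)) / (q₂ n : ℝ))
          linarith only [hna, hx1, hs_lt]
        · have hsa := le_abs_self ((Q n - ((u₀ n : ℤ) : ℝ)) / (q₂ n : ℝ))
          linarith only [hsa, hx1, hs_le]
      have hθ₂q₂ : |θ₂ n| / (q₂ n : ℝ) ≤ Q n ^ (-b) * Q n ^ (-(b / (ν - 1))) := by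
        have hd : |θ₂ n| / (q₂ n : ℝ) ≤ β n / Q n ^ (b / (ν - 1)) :=
          div_le_div₀ βp.le hθ₂β.le (Real.rpow_pos_of_pos Qp _) hq₂lb
        calc |θ₂ n| / (q₂ n : ℝ) ≤ β n / Q n ^ (b / (ν - 1)) := hd
          _ = Q n ^ (-b) * Q n ^ (-(b / (ν - 1))) := by
            rw [eβ, div_eq_mul_inv, ← Real.rpow_neg Qp.le]
      have hinv : (ε n)⁻¹ ≤ Q n ^ (1 / (μ - 1) - δ n) := by
        have h' := hεlb n
        have h'' := inv_anti₀ (Real.rpow_pos_of_pos Qp _) h'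
        rwa [← Real.rpow_neg Qp.le, show -(-(1 / (μ - 1)) + δ n) = 1 / (μ - 1) - δ n by ring]
          at h''
      have hεinv : (0:ℝ) < (ε n)⁻¹ := inv_pos.mpr εp
      -- term bounds
      have termA : Q n * (Q n ^ (-b) * Q n ^ (-(b / (ν - 1)))) * (ε n)⁻¹
          ≤ Q n ^ (e₁ - δ n) := by
        have l1 : Q n * (Q n ^ (-b) * Q n ^ (-(b / (ν - 1))))
            = Q n ^ (1 - b - b / (ν - 1)) := by
          rw [show (1:ℝ) - b - b / (ν - 1) = 1 + (-b + -(b / (ν - 1))) by ring,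
            Real.rpow_add Qp, Real.rpow_add Qp, Real.rpow_one]
        rw [l1]
        calc Q n ^ (1 - b - b / (ν - 1)) * (ε n)⁻¹
            ≤ Q n ^ (1 - b - b / (ν - 1)) * Q n ^ (1 / (μ - 1) - δ n) :=
              mul_le_mul_of_nonneg_left hinv (Real.rpow_nonneg Qp.le _)
          _ = Q n ^ (e₁ - δ n) := by
              rw [← Real.rpow_add Qp]
              congr 1
              rw [he₁def, hEdef]
              field_simp
              ring
      have termB : 2 ^ ν * ε n ^ (1 - z) * (Q n ^ (-b) * Q n ^ (-(b / (ν - 1)))) * (ε n)⁻¹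
          ≤ 2 ^ ν * Q n ^ ((1 / (μ - 1) - δ n) * z - E) := by
        have l1 : ε n ^ (1 - z) * (ε n)⁻¹ = ((ε n)⁻¹) ^ z := by
          rw [Real.inv_rpow εp.le, ← Real.rpow_neg εp.le]
          rw [show (ε n)⁻¹ = ε n ^ (-1:ℝ) by rw [Real.rpow_neg_one], ← Real.rpow_add εp]
          ring_nf
        have l2 : ((ε n)⁻¹) ^ z ≤ (Q n ^ (1 / (μ - 1) - δ n)) ^ z :=
          Real.rpow_le_rpow (inv_nonneg.mpr εp.le) hinv (le_of_lt hκν0)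
        have l3 : (Q n ^ (1 / (μ - 1) - δ n)) ^ z * (Q n ^ (-b) * Q n ^ (-(b / (ν - 1))))
            = Q n ^ ((1 / (μ - 1) - δ n) * z - E) := by
          rw [← Real.rpow_mul Qp.le, ← Real.rpow_add Qp, ← Real.rpow_add Qp]
          congr 1
          rw [hEdef]
          field_simp
          ring
        calc 2 ^ ν * ε n ^ (1 - z) * (Q n ^ (-b) * Q n ^ (-(b / (ν - 1)))) * (ε n)⁻¹
            = 2 ^ ν * ((ε n ^ (1 - z) * (ε n)⁻¹) * (Q n ^ (-b) * Q n ^ (-(b / (ν - 1))))) := by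
              ring
          _ = 2 ^ ν * (((ε n)⁻¹) ^ z * (Q n ^ (-b) * Q n ^ (-(b / (ν - 1))))) := by rw [l1]
          _ ≤ 2 ^ ν * ((Q n ^ (1 / (μ - 1) - δ n)) ^ z * (Q n ^ (-b) * Q n ^ (-(b / (ν - 1))))) := by
              apply mul_le_mul_of_nonneg_left ?_ (by positivity)
              apply mul_le_mul_of_nonneg_right l2 (by positivity)
          _ = 2 ^ ν * Q n ^ ((1 / (μ - 1) - δ n) * z - E) := by rw [l3]
      have termC : β n * (ε n)⁻¹ ≤ Q n ^ (-b + 1 / (μ - 1) - δ n) := by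
        calc β n * (ε n)⁻¹ ≤ Q n ^ (-b) * Q n ^ (1 / (μ - 1) - δ n) := by
              rw [eβ]
              exact mul_le_mul_of_nonneg_left hinv (Real.rpow_nonneg Qp.le _)
          _ = Q n ^ (-b + 1 / (μ - 1) - δ n) := by
              rw [← Real.rpow_add Qp]
              ring_nf
      -- putting it together
      have hterm0 : α n * (ε n)⁻¹ = ε n ^ κ := by
        rw [eα, show (ε n)⁻¹ = ε n ^ (-1:ℝ) by rw [Real.rpow_neg_one], ← Real.rpow_add εp]
        ring_nf
      have HA : |θ₁ n| * (ε n)⁻¹ ≤ ε n ^ κ := by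
        rw [← hterm0]
        exact mul_le_mul_of_nonneg_right hθ₁α.le hεinv.le
      have HB : |(s n : ℝ)| * |θ₂ n| * (ε n)⁻¹
          ≤ Q n ^ (e₁ - δ n) + 2 ^ ν * Q n ^ ((1 / (μ - 1) - δ n) * z - E)
            + Q n ^ (-b + 1 / (μ - 1) - δ n) := by
        have st1 : |(s n : ℝ)| * |θ₂ n| ≤ ((Q n + |((u₀ n : ℤ) : ℝ)|) / (q₂ n : ℝ) + 1) * |θ₂ n| :=
          mul_le_mul_of_nonneg_right habs2 (abs_nonneg _)
        have st2 : ((Q n + |((u₀ n : ℤ) : ℝ)|) / (q₂ n : ℝ) + 1) * |θ₂ n|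
            = (Q n + |((u₀ n : ℤ) : ℝ)|) * (|θ₂ n| / (q₂ n : ℝ)) + |θ₂ n| := by
          ring
        have st3 : (Q n + |((u₀ n : ℤ) : ℝ)|) * (|θ₂ n| / (q₂ n : ℝ))
            ≤ (Q n + 2 ^ ν * ε n ^ (1 - z)) * (Q n ^ (-b) * Q n ^ (-(b / (ν - 1)))) := by
          apply mul_le_mul (by linarith only [hu₀le]) hθ₂q₂ (by positivity) ?_
          have hppos : (0:ℝ) < 2 ^ ν * ε n ^ (1 - z) :=
            mul_pos (Real.rpow_pos_of_pos two_pos ν) (Real.rpow_pos_of_pos εp _)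
          linarith only [hppos, Qp]
        have st4 : |(s n : ℝ)| * |θ₂ n| * (ε n)⁻¹
            ≤ ((Q n + 2 ^ ν * ε n ^ (1 - z)) * (Q n ^ (-b) * Q n ^ (-(b / (ν - 1)))) + β n)
              * (ε n)⁻¹ := by
          apply mul_le_mul_of_nonneg_right ?_ hεinv.le
          calc |(s n : ℝ)| * |θ₂ n|
              ≤ (Q n + |((u₀ n : ℤ) : ℝ)|) * (|θ₂ n| / (q₂ n : ℝ)) + |θ₂ n| := by
                rw [← st2]; exact st1
            _ ≤ (Q n + 2 ^ ν * ε n ^ (1 - z)) * (Q n ^ (-b) * Q n ^ (-(b / (ν - 1)))) + β n := by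
                linarith only [st3, hθ₂β]
        have expand : ((Q n + 2 ^ ν * ε n ^ (1 - z)) * (Q n ^ (-b) * Q n ^ (-(b / (ν - 1)))) + β n)
              * (ε n)⁻¹
            = Q n * (Q n ^ (-b) * Q n ^ (-(b / (ν - 1)))) * (ε n)⁻¹
              + 2 ^ ν * ε n ^ (1 - z) * (Q n ^ (-b) * Q n ^ (-(b / (ν - 1)))) * (ε n)⁻¹
              + β n * (ε n)⁻¹ := by
          ring
        calc |(s n : ℝ)| * |θ₂ n| * (ε n)⁻¹
            ≤ ((Q n + 2 ^ ν * ε n ^ (1 - z)) * (Q n ^ (-b) * Q n ^ (-(b / (ν - 1)))) + β n)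
              * (ε n)⁻¹ := st4
          _ = _ := expand
          _ ≤ Q n ^ (e₁ - δ n) + 2 ^ ν * Q n ^ ((1 / (μ - 1) - δ n) * z - E)
              + Q n ^ (-b + 1 / (μ - 1) - δ n) :=
            add_le_add (add_le_add termA termB) termC
      rw [hstep1, hG₂def]
      calc |(((m n : ℝ) * |θ₁ n| - ε n) + (s n : ℝ) * θ₂ n) / ε n|
          = |((m n : ℝ) * |θ₁ n| - ε n) + (s n : ℝ) * θ₂ n| * (ε n)⁻¹ := by
            rw [abs_div, abs_of_pos εp, div_eq_mul_inv]
        _ ≤ (|θ₁ n| + |(s n : ℝ)| * |θ₂ n|) * (ε n)⁻¹ := by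
            apply mul_le_mul_of_nonneg_right ?_ hεinv.le
            calc |((m n : ℝ) * |θ₁ n| - ε n) + (s n : ℝ) * θ₂ n|
                ≤ |(m n : ℝ) * |θ₁ n| - ε n| + |(s n : ℝ) * θ₂ n| := abs_add_le _ _
              _ ≤ |θ₁ n| + |(s n : ℝ)| * |θ₂ n| := by
                  rw [abs_mul]
                  exact add_le_add habs1 le_rfl
        _ = |θ₁ n| * (ε n)⁻¹ + |(s n : ℝ)| * |θ₂ n| * (ε n)⁻¹ := by ring
        _ ≤ ε n ^ κ + (Q n ^ (e₁ - δ n) + 2 ^ ν * Q n ^ ((1 / (μ - 1) - δ n) * z - E)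
              + Q n ^ (-b + 1 / (μ - 1) - δ n)) := add_le_add HA HB
  refine ⟨fun n => u₀ n + s n * (q₂ n : ℤ), fun n => v₀ n + s n * p₂ n, ?_, ?_⟩
  · have habs : Tendsto (fun n => |((u₀ n + s n * (q₂ n : ℤ) : ℤ) : ℝ) / Q n - 1|) atTop (𝓝 0) :=
      squeeze_zero' (Eventually.of_forall fun n => abs_nonneg _)
        (hbound.mono fun n h => h.1) hG₁0
    have h0 : Tendsto (fun n => ((u₀ n + s n * (q₂ n : ℤ) : ℤ) : ℝ) / Q n - 1) atTop (𝓝 0) :=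
      (tendsto_zero_iff_abs_tendsto_zero _).mpr habs
    have := h0.add_const 1
    simpa using this
  · have habs : Tendsto (fun n =>
        |(((u₀ n + s n * (q₂ n : ℤ) : ℤ) : ℝ) * ξ - ((v₀ n + s n * p₂ n : ℤ) : ℝ)) / ε n - 1|)
        atTop (𝓝 0) :=
      squeeze_zero' (Eventually.of_forall fun n => abs_nonneg _)
        (hbound.mono fun n h => h.2) hG₂0
    have h0 : Tendsto (fun n =>
        (((u₀ n + s n * (q₂ n : ℤ) : ℤ) : ℝ) * ξ - ((v₀ n + s n * p₂ n : ℤ) : ℝ)) / ε n - 1)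
        atTop (𝓝 0) :=
      (tendsto_zero_iff_abs_tendsto_zero _).mpr habs
    have := h0.add_const 1
    simpa using this
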